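/- The linking mapping Φ induces a bijection from the set of ∼-equivalence classes of permutations of {1,…,n} onto the set S_n^c of permutations of {1,…,n} with one orbit. Concretely: (a) Φ(π) = Φ(σ) implies π ∼ σ, and (b) for every φ ∈ S_n^c there exists π with Φ(π) = φ. -/

import Mathlib

/-- Cyclic addition of the constant `k` to all values of a permutation of
`{1, …, n}` (identifying positions/values with `Fin n`, 1-based position `i`
corresponding to `i - 1 : Fin n`): `(addConst π k) i = π i + k (mod n)`. -/
def addConst {n : ℕ} (π : Equiv.Perm (Fin n)) (k : ℕ) : Equiv.Perm (Fin n) :=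
  π.trans (finRotate n ^ k)

/-- The linking permutation `Φ(π) = π⁻¹ ∘ (π + 1)`, i.e.
`Φ(π) i = π⁻¹ (π i + 1)` with cyclic value addition (`n + 1 ≡ 1`). -/
def linkPerm {n : ℕ} (π : Equiv.Perm (Fin n)) : Equiv.Perm (Fin n) :=
  (π.trans (finRotate n)).trans π.symm

/-- A permutation has exactly one orbit: iterating it reaches any element from
any element. -/
def OneOrbit {n : ℕ} (φ : Equiv.Perm (Fin n)) : Prop :=
  ∀ x y : Fin n, ∃ m : ℕ, (φ ^ m) x = y

/-- The descent set of a permutation of `{1, …, n}`, as a set of 1-based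
positions: `i ∈ [1, n-1]` is a descent iff `φ(i) > φ(i+1)`.  The 1-based
position `i` corresponds to the element `i - 1 : Fin n`. -/
def desSet {n : ℕ} (φ : Equiv.Perm (Fin n)) : Set ℕ :=
  {i : ℕ | ∃ h : i < n, 1 ≤ i ∧
    φ ⟨i, h⟩ < φ ⟨i - 1, Nat.lt_of_le_of_lt (Nat.sub_le i 1) h⟩}

/-- `π` is the suffix array of the word `w` of length `n`: `π i` is the
(0-based) starting position of the `i`-th smallest suffix of `w` in the
lexicographic order on lists (a proper prefix precedes its extensions). -/
def IsSuffixArray {α : Type*} [LinearOrder α] {n : ℕ} (w : List α)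
    (π : Equiv.Perm (Fin n)) : Prop :=
  w.length = n ∧ ∀ i j : Fin n, i < j → w.drop (π i : ℕ) < w.drop (π j : ℕ)

/-- `π` is the Burrows–Wheeler array of the word `w` of length `n`: `π i` is
the (0-based) starting position of the `i`-th smallest cyclic shift of `w`. -/
def IsBWArray {α : Type*} [LinearOrder α] {n : ℕ} (w : List α)
    (π : Equiv.Perm (Fin n)) : Prop :=
  w.length = n ∧ ∀ i j : Fin n, i < j → w.rotate (π i : ℕ) < w.rotate (π j : ℕ)

/-- A word is primitive iff it is not a proper power of another word:
`w = v^k` implies `k = 1`. -/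
def Primitive {α : Type*} (w : List α) : Prop :=
  ∀ (v : List α) (k : ℕ), w = (List.replicate k v).flatten → k = 1

/-- From `σ ∈ S_n`, the permutation `π' = (n+1) σ(1) ⋯ σ(n) ∈ S_{n+1}`:
position `1` (element `0 : Fin (n+1)`) is sent to the value `n + 1`
(element `Fin.last n`), and position `i + 1` is sent to the value `σ(i)`. -/
def appendMax {n : ℕ} (σ : Equiv.Perm (Fin n)) : Equiv.Perm (Fin (n + 1)) :=
  ((finSuccEquiv n).trans σ.optionCongr).trans (finSuccEquiv' (Fin.last n)).symm

/-- Binomial coefficient with integer arguments, which is `0` when the lower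
index is negative or exceeds the upper index. -/
def intChoose (m r : ℤ) : ℕ :=
  if 0 ≤ r ∧ r ≤ m then m.toNat.choose r.toNat else 0

/-- `π ∈ S_{n+1}` is ascending-to-max.  Values are 1-based: the value
`i ∈ [1, n-1]` corresponds to `x.castSucc` where `x : Fin n` satisfies
`(x : ℕ) + 1 = i` … i.e. `x = i - 1`; the value `i + 1` corresponds to
`x.succ`, and the value `n + 1` corresponds to `Fin.last n`. -/
def AscendingToMax {n : ℕ} (π : Equiv.Perm (Fin (n + 1))) : Prop :=
  ∀ x : Fin n, (x : ℕ) + 1 < n →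
    (π.symm x.castSucc < π.symm (Fin.last n) →
      π.symm x.succ < π.symm (Fin.last n) →
      π.symm x.castSucc < π.symm x.succ) ∧
    (π.symm (Fin.last n) < π.symm x.castSucc →
      π.symm (Fin.last n) < π.symm x.succ →
      π.symm x.succ < π.symm x.castSucc)

/-- `π ∈ S_{n+1}` is non-nesting.  Values are 1-based: the values `i, j ∈ [1, n]`
correspond to `x.castSucc, y.castSucc` with `x, y : Fin n`, and the values
`i + 1, j + 1` to `x.succ, y.succ`. -/
def NonNesting {n : ℕ} (π : Equiv.Perm (Fin (n + 1))) : Prop :=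
  ∀ x y : Fin n, π.symm x.castSucc < π.symm y.castSucc →
    ((π.symm x.castSucc < π.symm x.succ ∧ π.symm y.castSucc < π.symm y.succ) ∨
      (π.symm x.succ < π.symm x.castSucc ∧ π.symm y.succ < π.symm y.castSucc)) →
    π.symm x.succ < π.symm y.succ


/-!
Writing `c` for the standard `n`-cycle `finRotate n`, `Φ(π) = π⁻¹ c π` and `π + k = cᵏ π`.
So `Φ(π) = Φ(σ)` says that `σ π⁻¹` commutes with `c`, and a permutation commuting with `c`
is a translation `x ↦ x + t`, i.e. a power of `c`. The image of `Φ` is the conjugacy class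
of `c`, which consists of the permutations of cycle type `{n}`: the `n`-cycles.
-/

namespace Equiv.Perm

open Fin.NatCast

variable {n : ℕ}

theorem finRotate_pow_apply [NeZero n] (k : ℕ) (x : Fin n) :
    (finRotate n ^ k) x = x + k := by
  induction k with
  | zero => simp
  | succ k ih => rw [pow_succ', mul_apply, ih, finRotate_apply, Nat.cast_succ, add_assoc]

theorem apply_eq_add_apply_zero_of_commute_finRotate [NeZero n] {τ : Perm (Fin n)}
    (h : Commute τ (finRotate n)) (x : Fin n) : τ x = x + τ 0 := by
  have hx : (finRotate n ^ (x : ℕ)) 0 = x := by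
    rw [finRotate_pow_apply, Fin.cast_val_eq_self, zero_add]
  calc τ x = τ ((finRotate n ^ (x : ℕ)) 0) := by rw [hx]
    _ = (finRotate n ^ (x : ℕ)) (τ 0) := by rw [← mul_apply, (h.pow_right _).eq, mul_apply]
    _ = x + τ 0 := by rw [finRotate_pow_apply, Fin.cast_val_eq_self, add_comm]

theorem exists_finRotate_pow_eq_of_commute [NeZero n] {τ : Perm (Fin n)}
    (h : Commute τ (finRotate n)) : ∃ k, 1 ≤ k ∧ k ≤ n ∧ τ = finRotate n ^ k := by
  -- the exponent `τ 0`, represented in `[1, n]` instead of `[0, n)`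
  refine ⟨(τ 0 - 1 : Fin n) + 1, by omega, (τ 0 - 1).isLt, ?_⟩
  refine Equiv.ext fun x ↦ ?_
  rw [apply_eq_add_apply_zero_of_commute_finRotate h, finRotate_pow_apply, Nat.cast_succ,
    Fin.cast_val_eq_self, sub_add_cancel]

end Equiv.Perm

open Equiv.Perm

variable {n : ℕ}

theorem linkPerm_eq_conj (π : Equiv.Perm (Fin n)) : linkPerm π = π⁻¹ * finRotate n * π :=
  rfl

theorem addConst_eq_mul (π : Equiv.Perm (Fin n)) (k : ℕ) :
    addConst π k = finRotate n ^ k * π :=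
  rfl

theorem commute_mul_inv_finRotate_of_linkPerm_eq {π σ : Equiv.Perm (Fin n)}
    (h : linkPerm π = linkPerm σ) : Commute (σ * π⁻¹) (finRotate n) := by
  rw [linkPerm_eq_conj, linkPerm_eq_conj] at h
  calc σ * π⁻¹ * finRotate n = σ * (π⁻¹ * finRotate n * π) * π⁻¹ := by group
    _ = finRotate n * (σ * π⁻¹) := by rw [h]; group

theorem exists_addConst_eq_of_linkPerm_eq [NeZero n] {π σ : Equiv.Perm (Fin n)}
    (h : linkPerm π = linkPerm σ) : ∃ k, 1 ≤ k ∧ k ≤ n ∧ σ = addConst π k := by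
  obtain ⟨k, hk₁, hkn, hk⟩ :=
    exists_finRotate_pow_eq_of_commute (commute_mul_inv_finRotate_of_linkPerm_eq h)
  exact ⟨k, hk₁, hkn, by rw [addConst_eq_mul, ← hk, inv_mul_cancel_right]⟩

theorem OneOrbit.isCycleOn_univ {φ : Equiv.Perm (Fin n)} (hφ : OneOrbit φ) :
    φ.IsCycleOn Set.univ :=
  ⟨Set.bijOn_univ.2 φ.bijective, fun x _ y _ ↦
    let ⟨m, hm⟩ := hφ x y; ⟨m, by rwa [zpow_natCast]⟩⟩

theorem OneOrbit.cycleType {φ : Equiv.Perm (Fin n)} (hφ : OneOrbit φ) (hn : 2 ≤ n) :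
    φ.cycleType = {n} := by
  have : Nontrivial (Fin n) := Fin.nontrivial_iff_two_le.2 hn
  have hsupp : φ.support = Finset.univ :=
    Finset.eq_univ_of_forall fun x ↦
      mem_support.2 (hφ.isCycleOn_univ.apply_ne Set.nontrivial_univ (Set.mem_univ x))
  have hcycle : φ.IsCycle :=
    isCycle_iff_exists_isCycleOn.2 ⟨_, Set.nontrivial_univ, hφ.isCycleOn_univ, fun x _ ↦ trivial⟩
  rw [hcycle.cycleType, hsupp, Finset.card_univ, Fintype.card_fin]

theorem OneOrbit.exists_linkPerm_eq {φ : Equiv.Perm (Fin n)} (hφ : OneOrbit φ) :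
    ∃ π, linkPerm π = φ := by
  rcases le_or_gt n 1 with hn | hn
  · have : Subsingleton (Fin n) := Fin.subsingleton_iff_le_one.2 hn
    exact ⟨1, Subsingleton.elim _ _⟩
  obtain ⟨g, hg⟩ := isConj_iff.1 <|
    isConj_iff_cycleType_eq.2 ((cycleType_finRotate_of_le hn).trans (hφ.cycleType hn).symm)
  exact ⟨g⁻¹, by rw [linkPerm_eq_conj, inv_inv, hg]⟩

/-- The linking mapping `Φ` induces a bijection from
`S_n / ∼` onto the set of permutations of `{1, …, n}` with one orbit:
(a) `Φ(π) = Φ(σ)` implies `π ∼ σ`, and (b) every one-orbit permutation `φ`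
is `Φ(π)` for some `π`. -/
theorem linkPerm_bijective_mod_equiv {n : ℕ} (hn : 1 ≤ n) :
    (∀ π σ : Equiv.Perm (Fin n), linkPerm π = linkPerm σ →
      ∃ k : ℕ, 1 ≤ k ∧ k ≤ n ∧ σ = addConst π k) ∧
    (∀ φ : Equiv.Perm (Fin n), OneOrbit φ →
      ∃ π : Equiv.Perm (Fin n), linkPerm π = φ) := by
  have : NeZero n := ⟨by omega⟩
  exact ⟨fun _ _ ↦ exists_addConst_eq_of_linkPerm_eq, fun _ ↦ OneOrbit.exists_linkPerm_eq⟩
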